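/- arXiv:2504.18508 — 5 statements merged into one kernel-verified Lean document; each statement's English description precedes it below -/
import Mathlib

section
/- Let G be the graph obtained from the complete graph K_{k+2} on vertices {r,1,...,k+1} (k ≥ 1) by adding a vertex t0 adjacent to 1,...,k+1 and, for each 1 ≤ i ≤ k+1, a vertex t_i adjacent to t0 and i. Then G is chordal. -/
open SimpleGraph

/-- Vertices: the root `r`, clique vertices `base 1, ..., base (k+1)`,
the vertex `t0`, and the vertices `t i` for 1 ≤ i ≤ k+1. -/
inductive GVtx (k : ℕ) : Type
  | r : GVtx k
  | base : Fin (k + 1) → GVtx k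
  | t0 : GVtx k
  | t : Fin (k + 1) → GVtx k

/-- K_{k+2} on {r, 1, ..., k+1}, plus t0 adjacent to 1,...,k+1,
plus t_i adjacent to t0 and i. -/
def gadgetRel (k : ℕ) : GVtx k → GVtx k → Prop
  | .r, .base _ => True
  | .base _, .base _ => True
  | .t0, .base _ => True
  | .t i, .base j => i = j
  | .t _, .t0 => True
  | _, _ => False

def gadgetG (k : ℕ) : SimpleGraph (GVtx k) := SimpleGraph.fromRel (gadgetRel k)

/-- A graph is chordal iff it has no induced cycle of length ≥ 4. -/
def IsChordal {V : Type} (G : SimpleGraph V) : Prop :=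
  ∀ n : ℕ, 4 ≤ n → IsEmpty (SimpleGraph.cycleGraph n ↪g G)

/-!
The graph is a split graph: the vertices `1, …, k+1` and `t0` form a clique, and `r` together
with the `t i` form an independent set. Split graphs are chordal. Every neighbour of a vertex on
the independent side lies in the clique, so its neighbourhood is a clique; but a vertex of an
induced cycle of length at least 4 has two non-adjacent neighbours on the cycle. Hence an induced
cycle lies inside the clique, which is absurd since its vertices are not pairwise adjacent.
-/

open Fin.CommRing

namespace SimpleGraph

section Cycle

variable {m : ℕ}

lemma cycleGraph_adj_sub_one (p : Fin (m + 2)) : (cycleGraph (m + 2)).Adj p (p - 1) :=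
  cycleGraph_adj.2 (Or.inl (by ring))

lemma cycleGraph_adj_add_one (p : Fin (m + 2)) : (cycleGraph (m + 2)).Adj p (p + 1) :=
  cycleGraph_adj.2 (Or.inr (by ring))

lemma _root_.Fin.sub_one_ne_add_one (p : Fin (m + 4)) : p - 1 ≠ p + 1 := fun h ↦
  (show (2 : Fin (m + 4)) ≠ 0 by simp [Fin.ext_iff, Nat.mod_eq_of_lt]) (by linear_combination -h)

lemma cycleGraph_not_adj_sub_one_add_one (p : Fin (m + 4)) :
    ¬ (cycleGraph (m + 4)).Adj (p - 1) (p + 1) := by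
  rw [cycleGraph_adj]
  rintro (h | h)
  · exact (show (3 : Fin (m + 4)) ≠ 0 by simp [Fin.ext_iff, Nat.mod_eq_of_lt])
      (by linear_combination -h)
  · exact one_ne_zero (by linear_combination h : (1 : Fin (m + 4)) = 0)

variable {V : Type*} {G : SimpleGraph V}

lemma not_isClique_neighborSet_of_cycleGraph_embedding (f : cycleGraph (m + 4) ↪g G)
    (p : Fin (m + 4)) : ¬ G.IsClique (G.neighborSet (f p)) := fun h ↦
  cycleGraph_not_adj_sub_one_add_one p <| f.map_adj_iff.1 <|
    h (f.map_adj_iff.2 (cycleGraph_adj_sub_one p)) (f.map_adj_iff.2 (cycleGraph_adj_add_one p))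
      (f.injective.ne (Fin.sub_one_ne_add_one p))

lemma not_isClique_range_of_cycleGraph_embedding (f : cycleGraph (m + 4) ↪g G) :
    ¬ G.IsClique (Set.range f) := fun h ↦
  cycleGraph_not_adj_sub_one_add_one 0 <| f.map_adj_iff.1 <|
    h ⟨_, rfl⟩ ⟨_, rfl⟩ (f.injective.ne (Fin.sub_one_ne_add_one 0))

end Cycle

lemma isClique_neighborSet_of_isIndepSet_compl {V : Type*} {G : SimpleGraph V} {S : Set V}
    (hS : G.IsClique S) (hT : G.IsIndepSet Sᶜ) {v : V} (hv : v ∉ S) :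
    G.IsClique (G.neighborSet v) := by
  refine hS.subset fun w hw ↦ ?_
  by_contra hwS
  exact hT hv hwS (G.ne_of_adj hw) hw

theorem isChordal_of_isClique_of_isIndepSet_compl {V : Type} {G : SimpleGraph V} {S : Set V}
    (hS : G.IsClique S) (hT : G.IsIndepSet Sᶜ) : IsChordal G := by
  intro n hn
  obtain ⟨m, rfl⟩ : ∃ m, n = m + 4 := ⟨n - 4, by omega⟩
  refine ⟨fun f ↦ not_isClique_range_of_cycleGraph_embedding f (hS.subset ?_)⟩
  rintro _ ⟨p, rfl⟩
  by_contra hp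
  exact not_isClique_neighborSet_of_cycleGraph_embedding f p
    (isClique_neighborSet_of_isIndepSet_compl hS hT hp)

end SimpleGraph

def gadgetClique (k : ℕ) : Set (GVtx k) := insert .t0 (Set.range .base)

lemma isClique_gadgetClique (k : ℕ) : (gadgetG k).IsClique (gadgetClique k) := by
  rintro (_ | _ | _ | _) hu (_ | _ | _ | _) hv huv <;>
    simp_all [gadgetClique, gadgetG, gadgetRel]

lemma isIndepSet_compl_gadgetClique (k : ℕ) : (gadgetG k).IsIndepSet (gadgetClique k)ᶜ := by
  rintro (_ | _ | _ | _) hu (_ | _ | _ | _) hv huv <;>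
    simp_all [gadgetClique, gadgetG, gadgetRel]

theorem stmt1 : ∀ k : ℕ, 1 ≤ k → IsChordal (gadgetG k) := fun k _ ↦
  isChordal_of_isClique_of_isIndepSet_compl (isClique_gadgetClique k)
    (isIndepSet_compl_gadgetClique k)
end

section
/- Let G be the graph obtained from K_{k+2} on vertices {r,1,...,k+1} by adding t0 adjacent to 1,...,k+1 and vertices t_i adjacent to t0 and i for 1 ≤ i ≤ k+1. Let T be a spanning tree of G such that dist_T(r,v) = dist_G(r,v) for every vertex v at distance at most 2 from r. Then for every i with 1 ≤ i ≤ k+1, if the edge {t0,i} is not an edge of T, then dist_T(t0, t_i) = 4, while dist_G(t0,t_i) = 1. -/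
open SimpleGraph

/-!
In `T` the vertex `r` still reaches `t0` and `tᵢ` in two steps. The only common neighbour of `r`
and `tᵢ` in `G` is `i`, so `r - i - tᵢ` lies in `T`, while `r - w - t0` lies in `T` for some
`w ≠ i` because `{t0, i} ∉ T`. These glue to a path `t0 - w - r - i - tᵢ` of length 4, and in a
tree the unique path between two vertices is a shortest walk.
-/

namespace SimpleGraph

variable {V : Type*} {G : SimpleGraph V} {u v : V}

lemma dist_eq_two_iff :
    G.dist u v = 2 ↔ u ≠ v ∧ ¬G.Adj u v ∧ (G.commonNeighbors u v).Nonempty := by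
  rw [dist, ENat.toNat_eq_iff two_ne_zero, Nat.cast_ofNat, edist_eq_two_iff]

lemma exists_adj_adj_of_dist_eq_two (h : G.dist u v = 2) : ∃ w, G.Adj u w ∧ G.Adj w v := by
  obtain ⟨w, hw⟩ := (dist_eq_two_iff.mp h).2.2
  rw [mem_commonNeighbors] at hw
  exact ⟨w, hw.1, hw.2.symm⟩

lemma IsAcyclic.dist_eq_length (hG : G.IsAcyclic) {p : G.Walk u v} (hp : p.IsPath) :
    G.dist u v = p.length := by
  obtain ⟨q, hq, hlen⟩ := p.reachable.exists_path_of_dist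
  have : (⟨p, hp⟩ : G.Path u v) = ⟨q, hq⟩ := (hG.subsingleton_path u v).elim _ _
  rw [← hlen, Subtype.mk.inj this]

end SimpleGraph

namespace GVtx

variable {k : ℕ}

lemma gadgetG_dist_r_t0 : (gadgetG k).dist .r .t0 = 2 :=
  SimpleGraph.dist_eq_two_iff.mpr ⟨by simp, by simp [gadgetG, gadgetRel],
    ⟨.base 0, by simp [mem_commonNeighbors, gadgetG, gadgetRel]⟩⟩

lemma gadgetG_dist_r_t (i : Fin (k + 1)) : (gadgetG k).dist .r (.t i) = 2 :=
  SimpleGraph.dist_eq_two_iff.mpr ⟨by simp, by simp [gadgetG, gadgetRel],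
    ⟨.base i, by simp [mem_commonNeighbors, gadgetG, gadgetRel]⟩⟩

lemma gadgetG_dist_t0_t (i : Fin (k + 1)) : (gadgetG k).dist .t0 (.t i) = 1 := by
  simp [gadgetG, gadgetRel]

lemma eq_base_of_gadgetG_adj {i : Fin (k + 1)} {x : GVtx k}
    (hr : (gadgetG k).Adj .r x) (ht : (gadgetG k).Adj x (.t i)) : x = .base i := by
  cases x <;> simp_all [gadgetG, gadgetRel]

end GVtx

open GVtx in
/-- For any spanning tree `T` of the gadget preserving the distances from `r`
to all vertices at distance at most 2 from `r`: if the edge {t0, i} is not in `T`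
then dist_T(t0, t_i) = 4, while dist_G(t0, t_i) = 1. -/
theorem stmt2 :
    ∀ k : ℕ, 1 ≤ k →
    ∀ T : SimpleGraph (GVtx k), T ≤ gadgetG k → T.Connected → T.IsAcyclic →
      (∀ v : GVtx k, (gadgetG k).dist .r v ≤ 2 → T.dist .r v = (gadgetG k).dist .r v) →
      ∀ i : Fin (k + 1), ¬ T.Adj .t0 (.base i) →
        T.dist .t0 (.t i) = 4 ∧ (gadgetG k).dist .t0 (.t i) = 1 := by
  intro k _ T hTG _ hacyc hdist i hi
  refine ⟨?_, gadgetG_dist_t0_t i⟩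
  have hT_t0 : T.dist .r .t0 = 2 := (hdist _ gadgetG_dist_r_t0.le).trans gadgetG_dist_r_t0
  have hT_t : T.dist .r (.t i) = 2 := (hdist _ (gadgetG_dist_r_t i).le).trans (gadgetG_dist_r_t i)
  obtain ⟨w, hrw, hwt0⟩ := exists_adj_adj_of_dist_eq_two hT_t0
  obtain ⟨x, hrx, hxt⟩ := exists_adj_adj_of_dist_eq_two hT_t
  obtain rfl : x = .base i := eq_base_of_gadgetG_adj (hTG hrx) (hTG hxt)
  have hw_base : w ≠ .base i := by rintro rfl; exact hi hwt0.symm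
  have hw_t : w ≠ .t i := by
    rintro rfl
    exact (SimpleGraph.dist_eq_two_iff.mp (gadgetG_dist_r_t i)).2.1 (hTG hrw)
  let p : T.Walk .t0 (.t i) := .cons hwt0.symm (.cons hrw.symm (.cons hrx (.cons hxt .nil)))
  have hp : p.IsPath := by
    simp [p, Walk.cons_isPath_iff, hw_base, hw_t, hrw.ne', hwt0.ne']
  exact hacyc.dist_eq_length hp
end

section
/- The star graph G_k (the strongly chordal gadget) is chordal: G_k consists of a root r, vertices b_0,...,b_{2^k-1} forming a clique each adjacent to r, vertices d_0,...,d_{2^k-1} forming a clique with all edges between b's and d's present, and for each node S of the complete binary partition hierarchy of {0,...,2^k-1} (dyadic intervals) a vertex c_S adjacent exactly to {b_i, d_i : i ∈ S}. Then G_k has no induced cycle of length ≥ 4. -/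
/-!
The vertices `b i`, `d i` form a clique and the remaining vertices `r`, `c S` are pairwise
non-adjacent, so `G_k` is a split graph. On an induced cycle of length at least four in a split
graph, two vertices two steps apart are distinct and non-adjacent, so they cannot both lie in
the clique. But every edge of the cycle meets the clique, so a cycle vertex outside the clique
would have both of its neighbours (two steps apart) in it. Hence the whole cycle lies in the
clique, a contradiction.
-/

open SimpleGraph

/-- Vertices of the star graph G_k: the root `r`, the clique vertices
`b i` and `d i` for i < 2^k, and, for every dyadic interval of {0,...,2^k-1}
(given by a level `t ≤ k` and an index `j < 2^t`), a vertex `c t j`. -/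
inductive SVtx (k : ℕ) : Type
  | r : SVtx k
  | b : Fin (2 ^ k) → SVtx k
  | d : Fin (2 ^ k) → SVtx k
  | c : (t : Fin (k + 1)) → Fin (2 ^ (t : ℕ)) → SVtx k

/-- r is adjacent to all b's; the b's and d's together form a clique;
`c t j` is adjacent exactly to the b_i and d_i with i in the dyadic interval
{ i | i / 2^(k-t) = j }. -/
def starRel (k : ℕ) : SVtx k → SVtx k → Prop
  | .r, .b _ => True
  | .b _, .b _ => True
  | .d _, .d _ => True
  | .b _, .d _ => True
  | .c t j, .b i => (i : ℕ) / 2 ^ (k - (t : ℕ)) = (j : ℕ)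
  | .c t j, .d i => (i : ℕ) / 2 ^ (k - (t : ℕ)) = (j : ℕ)
  | _, _ => False

def starG (k : ℕ) : SimpleGraph (SVtx k) := SimpleGraph.fromRel (starRel k)

theorem Fin.self_ne_add_two {n : ℕ} [NeZero n] (hn : 3 ≤ n) (u : Fin n) : u ≠ u + 2 := by
  simp [Fin.ext_iff, Nat.mod_eq_of_lt (show 2 < n by omega)]

namespace SimpleGraph

variable {V W : Type*} {G : SimpleGraph V} {H : SimpleGraph W} {s : Set V}

theorem IsClique.comap (f : H ↪g G) (hs : G.IsClique s) : H.IsClique (f ⁻¹' s) :=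
  fun _ hu _ hv huv => f.map_adj_iff.mp (hs hu hv (f.injective.ne huv))

theorem IsIndepSet.comap (f : H ↪g G) (hs : G.IsIndepSet s) : H.IsIndepSet (f ⁻¹' s) :=
  fun _ hu _ hv huv hadj => hs hu hv (f.injective.ne huv) (f.map_adj_iff.mpr hadj)

theorem cycleGraph_adj_add_one_s9 {n : ℕ} [NeZero n] (hn : 2 ≤ n) (u : Fin n) :
    (cycleGraph n).Adj u (u + 1) := by
  rw [cycleGraph_adj']
  simp [Nat.mod_eq_of_lt (show 1 < n by omega)]

theorem cycleGraph_not_adj_add_two {n : ℕ} [NeZero n] (hn : 4 ≤ n) (u : Fin n) :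
    ¬ (cycleGraph n).Adj u (u + 2) := by
  rw [cycleGraph_adj']
  simp [Fin.val_neg', Nat.mod_eq_of_lt (show 2 < n by omega),
    Nat.mod_eq_of_lt (show n - 2 < n by omega)]
  omega

theorem cycleGraph_not_isIndepSet_compl {n : ℕ} (hn : 4 ≤ n) {s : Set (Fin n)}
    (hs : (cycleGraph n).IsClique s) : ¬ (cycleGraph n).IsIndepSet sᶜ := by
  intro hsc
  have : NeZero n := ⟨by omega⟩
  have not_two_apart (u : Fin n) : ¬ (u ∈ s ∧ u + 2 ∈ s) := fun ⟨hu, hu₂⟩ =>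
    cycleGraph_not_adj_add_two hn u (hs hu hu₂ (Fin.self_ne_add_two (by omega) u))
  have covers (u : Fin n) : u ∈ s ∨ u + 1 ∈ s := by
    by_contra! h
    have hadj := cycleGraph_adj_add_one_s9 (by omega) u
    exact hsc h.1 h.2 hadj.ne hadj
  have one_add_one : (1 : Fin n) + 1 = 2 := by ext; simp [Fin.val_add]
  have succ_mem (u : Fin n) : u + 1 ∈ s := by
    by_contra h
    refine not_two_apart u ⟨(covers u).resolve_right h, ?_⟩
    rw [← one_add_one, ← add_assoc]
    exact (covers (u + 1)).resolve_left h
  refine not_two_apart 0 ⟨by simpa using succ_mem (-1), ?_⟩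
  rw [zero_add, ← one_add_one]
  exact succ_mem 1

end SimpleGraph

def IsSplitGraph {V : Type*} (G : SimpleGraph V) : Prop :=
  ∃ s : Set V, G.IsClique s ∧ G.IsIndepSet sᶜ

theorem IsSplitGraph.isChordal {V : Type} {G : SimpleGraph V} (hG : IsSplitGraph G) :
    IsChordal G := by
  obtain ⟨s, hs, hsc⟩ := hG
  refine fun n hn => ⟨fun f => cycleGraph_not_isIndepSet_compl hn (hs.comap f) ?_⟩
  simpa only [Set.preimage_compl] using hsc.comap f

theorem starG_isSplitGraph (k : ℕ) : IsSplitGraph (starG k) := by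
  refine ⟨Set.range SVtx.b ∪ Set.range SVtx.d, ?_, ?_⟩
  · rintro _ (⟨i, rfl⟩ | ⟨i, rfl⟩) _ (⟨j, rfl⟩ | ⟨j, rfl⟩) hij <;>
      simp_all [starG, starRel]
  · intro x hx y hy _
    cases x <;> cases y <;> simp_all [starG, starRel]

/-- The star graph G_k is chordal. -/
theorem stmt9 : ∀ k : ℕ, IsChordal (starG k) :=
  fun k => (starG_isSplitGraph k).isChordal
end

section
/- The star graph G_k admits a simple elimination ordering, hence is strongly chordal: there exists a linear order v_1,...,v_n of its vertices such that each v_i is simple in the subgraph induced by {v_i,...,v_n}, where a vertex v is simple if the closed neighborhoods of the members of its closed neighborhood are linearly ordered by inclusion. -/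
open SimpleGraph

/-!
Eliminate the `c`-vertices level by level, from the finest dyadic intervals (`t = k`) to the
coarsest (`t = 0`), then `r`, then all of `B`, then all of `D`. Once the `c`-vertices are gone,
`B ∪ D` is a clique and `r` is dominated by every `b i`. When `c t j` is eliminated, the
`c`-vertices still present have levels `s ≤ t`, so their dyadic intervals either contain or miss
the interval `I` of `c t j`. Hence the `b i` with `i ∈ I` are true twins, and so are the `d i`,
while `N[c t j] ⊆ N[d i] ⊆ N[b i]`: the closed neighbourhoods around `c t j` form a chain.
-/

namespace SimpleGraph

variable {V : Type*} (G : SimpleGraph V) (f : V → ℕ)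

def closedNbhdFrom (n : ℕ) (u : V) : Set V :=
  {z | n ≤ f z ∧ (z = u ∨ G.Adj u z)}

variable {G f}

lemma closedNbhdFrom_mono {n : ℕ} {u w : V}
    (h : ∀ z, n ≤ f z → (z = u ∨ G.Adj u z) → z = w ∨ G.Adj w z) :
    G.closedNbhdFrom f n u ⊆ G.closedNbhdFrom f n w :=
  fun z ⟨hz, hzu⟩ => ⟨hz, h z hz hzu⟩

end SimpleGraph

lemma div_two_pow_eq_of_le {k t s i i' : ℕ} (hs : s ≤ t) (ht : t ≤ k)
    (h : i / 2 ^ (k - t) = i' / 2 ^ (k - t)) : i / 2 ^ (k - s) = i' / 2 ^ (k - s) := by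
  have hpow : 2 ^ (k - s) = 2 ^ (k - t) * 2 ^ (t - s) := by rw [← pow_add]; congr 1; omega
  rw [hpow, ← Nat.div_div_eq_div_mul, ← Nat.div_div_eq_div_mul, h]

namespace SVtx

variable {k : ℕ}

def phase : SVtx k → ℕ
  | c t _ => k - t
  | r => k + 1
  | b _ => k + 2
  | d _ => k + 3

def offset : SVtx k → ℕ
  | c _ j => j
  | r => 0
  | b i => i
  | d i => i

lemma offset_lt_two_pow (v : SVtx k) : v.offset < 2 ^ k := by
  cases v with
  | c t j => exact j.isLt.trans_le (Nat.pow_le_pow_right two_pos (Nat.lt_succ_iff.mp t.isLt))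
  | r => exact Nat.two_pow_pos k
  | b i | d i => exact i.isLt

/-- Position in the elimination order: the phase is the leading digit in base `2 ^ k`. -/
def rank (v : SVtx k) : ℕ := 2 ^ k * v.phase + v.offset

lemma rank_div_two_pow (v : SVtx k) : v.rank / 2 ^ k = v.phase := by
  rw [rank, Nat.mul_add_div (Nat.two_pow_pos k), Nat.div_eq_of_lt v.offset_lt_two_pow, add_zero]

lemma rank_mod_two_pow (v : SVtx k) : v.rank % 2 ^ k = v.offset := by
  rw [rank, Nat.mul_add_mod, Nat.mod_eq_of_lt v.offset_lt_two_pow]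

lemma phase_le_of_rank_le {v w : SVtx k} (h : v.rank ≤ w.rank) : v.phase ≤ w.phase := by
  simpa only [rank_div_two_pow] using Nat.div_le_div_right (c := 2 ^ k) h

lemma eq_of_phase_eq_of_offset_eq {v w : SVtx k} (hp : v.phase = w.phase)
    (ho : v.offset = w.offset) : v = w := by
  cases v <;> cases w <;> simp only [phase, offset] at hp ho <;> try omega
  case r.r => rfl
  case b.b => exact congrArg b (Fin.ext ho)
  case d.d => exact congrArg d (Fin.ext ho)
  case c.c t j s j' =>
    obtain rfl : t = s := Fin.ext (by omega)
    exact congrArg _ (Fin.ext ho)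

lemma rank_injective : Function.Injective (rank (k := k)) := fun v w h =>
  eq_of_phase_eq_of_offset_eq (by rw [← rank_div_two_pow, h, rank_div_two_pow])
    (by rw [← rank_mod_two_pow, h, rank_mod_two_pow])

variable {t s : Fin (k + 1)} {j : Fin (2 ^ (t : ℕ))} {j' : Fin (2 ^ (s : ℕ))}
  {m m' : Fin (2 ^ k)} {u w z : SVtx k}

lemma le_of_rank_c_le (h : (c t j).rank ≤ (c s j').rank) : (s : ℕ) ≤ t := by
  have := phase_le_of_rank_le h
  simp only [phase] at this
  omega

@[simp] lemma adj_b_r : (starG k).Adj (b m) r := by simp [starG, starRel]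

@[simp] lemma not_adj_d_r : ¬(starG k).Adj (d m) r := by simp [starG, starRel]

@[simp] lemma adj_b_c : (starG k).Adj (b m) (c s j') ↔ (m : ℕ) / 2 ^ (k - s) = j' := by
  simp [starG, starRel]

@[simp] lemma adj_d_c : (starG k).Adj (d m) (c s j') ↔ (m : ℕ) / 2 ^ (k - s) = j' := by
  simp [starG, starRel]

def bd (k : ℕ) : Set (SVtx k) := Set.range b ∪ Set.range d

lemma isClique_bd : (starG k).IsClique (bd k) := by
  rintro _ (⟨i, rfl⟩ | ⟨i, rfl⟩) _ (⟨i', rfl⟩ | ⟨i', rfl⟩) hne <;> simp_all [starG, starRel]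

lemma eq_or_adj_of_mem_bd (hz : z ∈ bd k) (hw : w ∈ bd k) : z = w ∨ (starG k).Adj w z :=
  or_iff_not_imp_left.mpr fun hne => isClique_bd hw hz (Ne.symm hne)

lemma b_mem_bd : b m ∈ bd k := Or.inl ⟨m, rfl⟩

lemma d_mem_bd : d m ∈ bd k := Or.inr ⟨m, rfl⟩

lemma mem_bd_of_rank_le {v : SVtx k} (hv : v ∈ bd k) (h : v.rank ≤ z.rank) : z ∈ bd k := by
  have hp := phase_le_of_rank_le h
  rcases hv with ⟨i, rfl⟩ | ⟨i, rfl⟩ <;> cases z <;> simp_all [bd, phase] <;> omega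

lemma eq_r_or_mem_bd_of_rank_le (h : (r : SVtx k).rank ≤ z.rank) : z = r ∨ z ∈ bd k := by
  have hp := phase_le_of_rank_le h
  cases z <;> simp_all [bd, phase]
  omega

lemma eq_r_or_eq_b_of_adj_r (hu : u = r ∨ (starG k).Adj r u) : u = r ∨ ∃ m, u = b m := by
  cases u <;> simp_all [starG, starRel]

lemma eq_c_or_mem_block_of_adj_c (hu : u = c t j ∨ (starG k).Adj (c t j) u) :
    u = c t j ∨ ∃ m : Fin (2 ^ k), (m : ℕ) / 2 ^ (k - t) = j ∧ (u = b m ∨ u = d m) := by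
  cases u <;> simp_all [starG, starRel]

lemma closedNbhd_c_subset_d (hm : (m : ℕ) / 2 ^ (k - t) = j)
    (hz : z = c t j ∨ (starG k).Adj (c t j) z) : z = d m ∨ (starG k).Adj (d m) z := by
  rcases eq_c_or_mem_block_of_adj_c hz with rfl | ⟨m', -, rfl | rfl⟩
  · exact Or.inr (adj_d_c.mpr hm)
  · exact eq_or_adj_of_mem_bd b_mem_bd d_mem_bd
  · exact eq_or_adj_of_mem_bd d_mem_bd d_mem_bd

lemma closedNbhd_d_subset_b (hz : z = d m ∨ (starG k).Adj (d m) z) :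
    z = b m ∨ (starG k).Adj (b m) z := by
  cases z with
  | r => simp_all
  | b i => exact eq_or_adj_of_mem_bd b_mem_bd b_mem_bd
  | d i => exact eq_or_adj_of_mem_bd d_mem_bd b_mem_bd
  | c s j' => simp_all

lemma div_two_pow_eq_of_rank_c_le (hz : (c t j).rank ≤ (c s j').rank)
    (hm : (m : ℕ) / 2 ^ (k - t) = j) (hm' : (m' : ℕ) / 2 ^ (k - t) = j)
    (h : (m : ℕ) / 2 ^ (k - s) = j') : (m' : ℕ) / 2 ^ (k - s) = j' :=
  (div_two_pow_eq_of_le (le_of_rank_c_le hz) (Nat.lt_succ_iff.mp t.isLt)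
    (hm'.trans hm.symm)).trans h

lemma closedNbhdFrom_b_subset_b (hm : (m : ℕ) / 2 ^ (k - t) = j)
    (hm' : (m' : ℕ) / 2 ^ (k - t) = j) :
    (starG k).closedNbhdFrom rank (c t j).rank (b m) ⊆
      (starG k).closedNbhdFrom rank (c t j).rank (b m') :=
  closedNbhdFrom_mono fun z hz hzm => by
    cases z with
    | r => simp
    | b i => exact eq_or_adj_of_mem_bd b_mem_bd b_mem_bd
    | d i => exact eq_or_adj_of_mem_bd d_mem_bd b_mem_bd
    | c s j' =>
      simp only [reduceCtorEq, false_or, adj_b_c] at hzm ⊢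
      exact div_two_pow_eq_of_rank_c_le hz hm hm' hzm

lemma closedNbhdFrom_d_subset_d (hm : (m : ℕ) / 2 ^ (k - t) = j)
    (hm' : (m' : ℕ) / 2 ^ (k - t) = j) :
    (starG k).closedNbhdFrom rank (c t j).rank (d m) ⊆
      (starG k).closedNbhdFrom rank (c t j).rank (d m') :=
  closedNbhdFrom_mono fun z hz hzm => by
    cases z with
    | r => simp_all
    | b i => exact eq_or_adj_of_mem_bd b_mem_bd d_mem_bd
    | d i => exact eq_or_adj_of_mem_bd d_mem_bd d_mem_bd
    | c s j' =>
      simp only [reduceCtorEq, false_or, adj_d_c] at hzm ⊢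
      exact div_two_pow_eq_of_rank_c_le hz hm hm' hzm

def weight : SVtx k → ℕ
  | b _ => 2
  | d _ => 1
  | _ => 0

lemma closedNbhdFrom_subset_of_mem_bd {v : SVtx k} (hv : v ∈ bd k) (hw : v.rank ≤ w.rank) :
    (starG k).closedNbhdFrom rank v.rank u ⊆ (starG k).closedNbhdFrom rank v.rank w :=
  closedNbhdFrom_mono fun _ hz _ =>
    eq_or_adj_of_mem_bd (mem_bd_of_rank_le hv hz) (mem_bd_of_rank_le hv hw)

lemma closedNbhdFrom_r_subset (hu : u = r ∨ (starG k).Adj r u) (hw : w = r ∨ (starG k).Adj r w)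
    (h : u.weight ≤ w.weight) :
    (starG k).closedNbhdFrom rank (r : SVtx k).rank u ⊆
      (starG k).closedNbhdFrom rank (r : SVtx k).rank w := by
  rcases eq_r_or_eq_b_of_adj_r hw with rfl | ⟨m, rfl⟩
  · rcases eq_r_or_eq_b_of_adj_r hu with rfl | ⟨m, rfl⟩
    · exact Set.Subset.rfl
    · simp [weight] at h
  · refine closedNbhdFrom_mono fun z hz _ => ?_
    rcases eq_r_or_mem_bd_of_rank_le hz with rfl | hz
    · exact Or.inr adj_b_r
    · exact eq_or_adj_of_mem_bd hz b_mem_bd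

lemma closedNbhdFrom_c_subset (hu : u = c t j ∨ (starG k).Adj (c t j) u)
    (hw : w = c t j ∨ (starG k).Adj (c t j) w) (h : u.weight ≤ w.weight) :
    (starG k).closedNbhdFrom rank (c t j).rank u ⊆
      (starG k).closedNbhdFrom rank (c t j).rank w := by
  rcases eq_c_or_mem_block_of_adj_c hw with rfl | ⟨m', hm', rfl | rfl⟩ <;>
    rcases eq_c_or_mem_block_of_adj_c hu with rfl | ⟨m, hm, rfl | rfl⟩ <;>
    norm_num [weight] at h
  · exact Set.Subset.rfl
  · exact closedNbhdFrom_mono fun _ _ hz => closedNbhd_d_subset_b (closedNbhd_c_subset_d hm' hz)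
  · exact closedNbhdFrom_b_subset_b hm hm'
  · exact (closedNbhdFrom_mono fun _ _ => closedNbhd_d_subset_b).trans
      (closedNbhdFrom_b_subset_b hm hm')
  · exact closedNbhdFrom_mono fun _ _ => closedNbhd_c_subset_d hm'
  · exact closedNbhdFrom_d_subset_d hm hm'

lemma closedNbhdFrom_subset_of_weight_le {v : SVtx k} (hu : u = v ∨ (starG k).Adj v u)
    (hw : w = v ∨ (starG k).Adj v w) (hvw : v.rank ≤ w.rank) (h : u.weight ≤ w.weight) :
    (starG k).closedNbhdFrom rank v.rank u ⊆ (starG k).closedNbhdFrom rank v.rank w := by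
  cases v with
  | r => exact closedNbhdFrom_r_subset hu hw h
  | b i => exact closedNbhdFrom_subset_of_mem_bd b_mem_bd hvw
  | d i => exact closedNbhdFrom_subset_of_mem_bd d_mem_bd hvw
  | c t j => exact closedNbhdFrom_c_subset hu hw h

end SVtx

/-- The star graph G_k admits a simple elimination ordering (hence is strongly
chordal): there is an ordering (injective rank function f) of the vertices such
that each vertex v is simple in the subgraph induced by the vertices of rank ≥ f v:
the closed neighborhoods (within that induced subgraph) of the members of the
closed neighborhood of v are linearly ordered by inclusion. -/
theorem stmt10 :
    ∀ k : ℕ, ∃ f : SVtx k → ℕ, Function.Injective f ∧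
      ∀ v u w : SVtx k,
        f v ≤ f u → (u = v ∨ (starG k).Adj v u) →
        f v ≤ f w → (w = v ∨ (starG k).Adj v w) →
        ({z : SVtx k | f v ≤ f z ∧ (z = u ∨ (starG k).Adj u z)} ⊆
           {z : SVtx k | f v ≤ f z ∧ (z = w ∨ (starG k).Adj w z)} ∨
         {z : SVtx k | f v ≤ f z ∧ (z = w ∨ (starG k).Adj w z)} ⊆
           {z : SVtx k | f v ≤ f z ∧ (z = u ∨ (starG k).Adj u z)}) :=
  fun _ => ⟨SVtx.rank, SVtx.rank_injective, fun _ u w hvu hu hvw hw =>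
    (le_total u.weight w.weight).imp (SVtx.closedNbhdFrom_subset_of_weight_le hu hw hvw)
      (SVtx.closedNbhdFrom_subset_of_weight_le hw hu hvu)⟩
end

section
/- For the ℓ-house graph H_ℓ (a chain of ℓ 4-cycles sharing opposite edges, with an apex r adjacent to the two end-vertices 1,2 of the first 4-cycle plus the edge 12, and t1,t2 the two degree-2 vertices of the last 4-cycle): dist_{H_ℓ}(t1,t2) = 1, dist_{H_ℓ}(r,t1) = dist_{H_ℓ}(r,t2) = ℓ+1, and in any spanning tree T of H_ℓ with dist_T(r,v) = dist_{H_ℓ}(r,v) for all v, dist_T(t1,t2) = 2(ℓ+1). -/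
/-!
`level` (`0` at the apex, `j + 1` on the `j`-th pair) changes by at most one along every edge, and
so does `signedLevel` (`j + 1` at `u_j`, `-(j + 1)` at `w_j`) except across the rungs `u_j w_j`.
Hence `level` is the distance from the apex. Edges of a distance-preserving spanning tree join
different levels, so the tree has no rung and `signedLevel` is 1-Lipschitz along it: the tree
distance from `t1` to `t2` is at least `(ℓ + 1) - (-(ℓ + 1))`. The path through the apex gives the
reverse bound.
-/

open SimpleGraph

/-- The ℓ-house: apex r = inl (), and pairs u_j = inr (j, false), w_j = inr (j, true)
for 0 ≤ j ≤ ℓ, with edges r u_0, r w_0, u_j w_j for all j, and the ladder edges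
u_{j-1} u_j, w_{j-1} w_j. The terminals are t1 = u_ℓ and t2 = w_ℓ. -/
def houseLRel (l : ℕ) :
    (Unit ⊕ Fin (l + 1) × Bool) → (Unit ⊕ Fin (l + 1) × Bool) → Prop
  | .inl _, .inr (j, _) => (j : ℕ) = 0
  | .inr (j, s), .inr (j', s') =>
      (j = j' ∧ s ≠ s') ∨ (s = s' ∧ (j : ℕ) + 1 = (j' : ℕ))
  | _, _ => False

def houseL (l : ℕ) : SimpleGraph (Unit ⊕ Fin (l + 1) × Bool) :=
  SimpleGraph.fromRel (houseLRel l)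

namespace SimpleGraph

variable {V : Type*} {G : SimpleGraph V}

lemma Walk.le_add_length_of_adj_le (φ : V → ℤ) (hφ : ∀ x y, G.Adj x y → φ y ≤ φ x + 1)
    {x y : V} (p : G.Walk x y) : φ y ≤ φ x + p.length := by
  induction p with
  | nil => simp
  | cons h _ ih =>
    rw [Walk.length_cons]
    have := hφ _ _ h
    push_cast
    linarith

lemma Reachable.le_add_dist_of_adj_le (φ : V → ℤ) (hφ : ∀ x y, G.Adj x y → φ y ≤ φ x + 1)
    {x y : V} (h : G.Reachable x y) : φ y ≤ φ x + G.dist x y := by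
  obtain ⟨p, hp⟩ := h.exists_walk_length_eq_dist
  simpa [hp] using p.le_add_length_of_adj_le φ hφ

end SimpleGraph

namespace HouseL

variable {l : ℕ}

@[simp]
lemma adj_inl_inr {j : Fin (l + 1)} {s : Bool} :
    (houseL l).Adj (.inl ()) (.inr (j, s)) ↔ (j : ℕ) = 0 := by
  simp [houseL, houseLRel]

@[simp]
lemma adj_inr_inl {j : Fin (l + 1)} {s : Bool} :
    (houseL l).Adj (.inr (j, s)) (.inl ()) ↔ (j : ℕ) = 0 := by
  rw [SimpleGraph.adj_comm, adj_inl_inr]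

@[simp]
lemma adj_inr_inr {j j' : Fin (l + 1)} {s s' : Bool} :
    (houseL l).Adj (.inr (j, s)) (.inr (j', s')) ↔
      (j = j' ∧ s ≠ s') ∨ (s = s' ∧ ((j : ℕ) + 1 = j' ∨ (j' : ℕ) + 1 = j)) := by
  simp only [houseL, fromRel_adj, houseLRel, ne_eq, Sum.inr.injEq, Prod.mk.injEq, Fin.ext_iff]
  cases s <;> cases s' <;> simp <;> omega

def level : Unit ⊕ Fin (l + 1) × Bool → ℤ
  | .inl _ => 0
  | .inr (j, _) => (j : ℤ) + 1

def signedLevel : Unit ⊕ Fin (l + 1) × Bool → ℤ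
  | .inl _ => 0
  | .inr (j, s) => if s then -((j : ℤ) + 1) else (j : ℤ) + 1

lemma level_le_add_one_of_adj {x y : Unit ⊕ Fin (l + 1) × Bool} (h : (houseL l).Adj x y) :
    level y ≤ level x + 1 := by
  rcases x with ⟨⟨⟩⟩ | ⟨j, s⟩ <;> rcases y with ⟨⟨⟩⟩ | ⟨j', s'⟩ <;>
    simp [level] at h ⊢ <;> omega

lemma signedLevel_le_add_one_of_adj {x y : Unit ⊕ Fin (l + 1) × Bool}
    (h : (houseL l).Adj x y) (hxy : level x ≠ level y) :
    signedLevel y ≤ signedLevel x + 1 := by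
  rcases x with ⟨⟨⟩⟩ | ⟨j, _ | _⟩ <;> rcases y with ⟨⟨⟩⟩ | ⟨j', _ | _⟩ <;>
    simp [level, signedLevel] at h hxy ⊢ <;> omega

lemma exists_walk_root (j : ℕ) (hj : j < l + 1) (s : Bool) :
    ∃ p : (houseL l).Walk (.inl ()) (.inr (⟨j, hj⟩, s)), p.length = j + 1 := by
  induction j with
  | zero => exact ⟨.cons (by simp) .nil, rfl⟩
  | succ k ih =>
    obtain ⟨p, hp⟩ := ih (by omega)
    exact ⟨p.concat (by simp), by rw [SimpleGraph.Walk.length_concat, hp]⟩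

lemma dist_root (v : Unit ⊕ Fin (l + 1) × Bool) :
    ((houseL l).dist (.inl ()) v : ℤ) = level v := by
  rcases v with ⟨⟩ | ⟨⟨j, hj⟩, s⟩
  · simp [level]
  obtain ⟨p, hp⟩ := exists_walk_root j hj s
  have hupper : (houseL l).dist (.inl ()) (.inr (⟨j, hj⟩, s)) ≤ j + 1 := hp ▸ dist_le p
  have hlower := p.reachable.le_add_dist_of_adj_le level fun _ _ ↦ level_le_add_one_of_adj
  simp only [level] at hlower ⊢
  omega

end HouseL

open HouseL in
/-- In the ℓ-house: dist(t1,t2) = 1, dist(r,t1) = dist(r,t2) = ℓ+1, and every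
spanning tree preserving all distances from r has dist(t1,t2) = 2(ℓ+1). -/
theorem stmt18 :
    ∀ l : ℕ, 1 ≤ l →
      (houseL l).dist (.inr (Fin.last l, false)) (.inr (Fin.last l, true)) = 1 ∧
      (houseL l).dist (.inl ()) (.inr (Fin.last l, false)) = l + 1 ∧
      (houseL l).dist (.inl ()) (.inr (Fin.last l, true)) = l + 1 ∧
      ∀ T : SimpleGraph (Unit ⊕ Fin (l + 1) × Bool),
        T ≤ houseL l → T.Connected → T.IsAcyclic →
        (∀ v, T.dist (.inl ()) v = (houseL l).dist (.inl ()) v) →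
        T.dist (.inr (Fin.last l, false)) (.inr (Fin.last l, true)) = 2 * (l + 1) := by
  intro l _
  have hroot (s : Bool) : (houseL l).dist (.inl ()) (.inr (Fin.last l, s)) = l + 1 := by
    have := dist_root (l := l) (.inr (Fin.last l, s))
    simp only [level, Fin.val_last] at this
    exact_mod_cast this
  refine ⟨dist_eq_one_iff_adj.mpr (by simp), hroot false, hroot true, ?_⟩
  intro T hTle hTconn hTacyc hTdist
  -- a BFS tree has no edge inside a level, so it never uses a rung `u_j w_j`
  have hsigned (x y) (h : T.Adj x y) : signedLevel y ≤ signedLevel x + 1 := by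
    refine signedLevel_le_add_one_of_adj (hTle h) ?_
    rw [← dist_root, ← dist_root, ← hTdist, ← hTdist]
    exact_mod_cast hTacyc.dist_ne_of_adj h (hTconn _ _)
  apply le_antisymm
  · calc T.dist (.inr (Fin.last l, false)) (.inr (Fin.last l, true))
        ≤ T.dist (.inr (Fin.last l, false)) (.inl ())
            + T.dist (.inl ()) (.inr (Fin.last l, true)) := hTconn.dist_triangle
      _ = 2 * (l + 1) := by rw [dist_comm, hTdist, hTdist, hroot, hroot]; ring
  · have := (hTconn (.inr (Fin.last l, true)) (.inr (Fin.last l, false))).le_add_dist_of_adj_le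
      signedLevel hsigned
    simp only [signedLevel, Fin.val_last, Bool.false_eq_true, if_true, if_false] at this
    rw [dist_comm]
    omega
end
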